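/- arXiv:2012.08350 — 2 statements merged into one kernel-verified Lean document; each statement's English description precedes it below -/
import Mathlib

section
/- Let G(x) = -(1/2)e^{-|x|}. For any f ∈ L¹(ℝ) ∩ L^∞(ℝ) and any x₁ ≤ x₂ in ℝ, one has |[G*f]_x(x₂) - [G*f]_x(x₁)| ≤ (1/2)(1 - e^{x₁-x₂}) ∫_{ℝ \ [x₁,x₂]} |f(z)| dz + ∫_{[x₁,x₂]} |f(z)| dz. -/
/-!
With `K x = (1/2) sign x e^{-|x|}`, the difference to bound is
`∫ (K (x₂ - y) - K (x₁ - y)) f y dy`. For `y ∈ [x₁, x₂]` the kernel difference is at most `1` in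
absolute value, since `|K| ≤ 1/2`. For `y ∉ [x₁, x₂]` the points `x₁ - y ≤ x₂ - y` lie on the
same side of `0`, where `K` is `± (1/2) e^{∓x}`, and the kernel difference is
`(1/2) e^{-d} (1 - e^{x₁ - x₂})`, with `d` the distance from `y` to the interval.
-/

open MeasureTheory Set Real

noncomputable def poissonKernelDeriv (x : ℝ) : ℝ := 1 / 2 * Real.sign x * Real.exp (-|x|)

lemma measurable_realSign : Measurable Real.sign :=
  Measurable.ite measurableSet_Iio measurable_const
    (Measurable.ite measurableSet_Ioi measurable_const measurable_const)

lemma measurable_poissonKernelDeriv : Measurable poissonKernelDeriv :=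
  (measurable_const.mul measurable_realSign).mul (measurable_exp.comp measurable_abs.neg)

lemma poissonKernelDeriv_neg (x : ℝ) : poissonKernelDeriv (-x) = -poissonKernelDeriv x := by
  simp only [poissonKernelDeriv, Real.sign_neg, abs_neg]
  ring

lemma abs_poissonKernelDeriv_le (x : ℝ) : |poissonKernelDeriv x| ≤ 1 / 2 := by
  have h_sign : |Real.sign x| ≤ 1 := by
    rcases Real.sign_apply_eq x with h | h | h <;> simp [h]
  have h_exp : Real.exp (-|x|) ≤ 1 := exp_le_one_iff.mpr (neg_nonpos.mpr (abs_nonneg x))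
  rw [poissonKernelDeriv, abs_mul, abs_mul, abs_of_pos (exp_pos _), abs_of_pos one_half_pos]
  calc 1 / 2 * |Real.sign x| * Real.exp (-|x|) ≤ 1 / 2 * 1 * 1 := by gcongr
    _ = 1 / 2 := by ring

lemma abs_poissonKernelDeriv_sub_le_one (u v : ℝ) :
    |poissonKernelDeriv v - poissonKernelDeriv u| ≤ 1 :=
  calc |poissonKernelDeriv v - poissonKernelDeriv u|
      ≤ |poissonKernelDeriv v| + |poissonKernelDeriv u| := abs_sub _ _
    _ ≤ 1 / 2 + 1 / 2 := add_le_add (abs_poissonKernelDeriv_le v) (abs_poissonKernelDeriv_le u)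
    _ = 1 := by norm_num

lemma abs_poissonKernelDeriv_sub_le_of_pos {u v : ℝ} (hu : 0 < u) (huv : u ≤ v) :
    |poissonKernelDeriv v - poissonKernelDeriv u| ≤ 1 / 2 * (1 - Real.exp (u - v)) := by
  have hv : 0 < v := hu.trans_le huv
  have h_split : Real.exp (-v) = Real.exp (-u) * Real.exp (u - v) := by
    rw [← exp_add]; ring_nf
  have h_eu : Real.exp (-u) ≤ 1 := exp_le_one_iff.mpr (by linarith)
  have h_euv : Real.exp (u - v) ≤ 1 := exp_le_one_iff.mpr (by linarith)
  have h_diff : poissonKernelDeriv v - poissonKernelDeriv u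
      = -(1 / 2 * Real.exp (-u) * (1 - Real.exp (u - v))) := by
    rw [poissonKernelDeriv, poissonKernelDeriv, Real.sign_of_pos hu, Real.sign_of_pos hv,
      abs_of_pos hu, abs_of_pos hv, h_split]
    ring
  rw [h_diff, abs_neg, abs_of_nonneg (by have := exp_pos (-u); nlinarith)]
  nlinarith [exp_pos (-u)]

lemma abs_poissonKernelDeriv_sub_le_of_zero_notMem {u v : ℝ} (huv : u ≤ v)
    (h0 : (0 : ℝ) ∉ Icc u v) :
    |poissonKernelDeriv v - poissonKernelDeriv u| ≤ 1 / 2 * (1 - Real.exp (u - v)) := by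
  rw [mem_Icc, not_and_or, not_le, not_le] at h0
  rcases h0 with hu | hv
  · exact abs_poissonKernelDeriv_sub_le_of_pos hu huv
  · have h := abs_poissonKernelDeriv_sub_le_of_pos (neg_pos.mpr hv) (neg_le_neg huv)
    rwa [poissonKernelDeriv_neg, poissonKernelDeriv_neg, neg_sub_neg, neg_sub_neg] at h

lemma integrable_poissonKernelDeriv_mul {f : ℝ → ℝ} (hf : Integrable f) (x : ℝ) :
    Integrable (fun y => poissonKernelDeriv (x - y) * f y) :=
  hf.bdd_mul
    (measurable_poissonKernelDeriv.comp (measurable_const.sub measurable_id)).aestronglyMeasurable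
    (ae_of_all _ fun y => abs_poissonKernelDeriv_le (x - y))

lemma setIntegral_abs_mul_le_of_abs_le {α : Type*} [MeasurableSpace α] {μ : Measure α}
    {s : Set α} {g f : α → ℝ} {c : ℝ} (hs : MeasurableSet s)
    (hgf : IntegrableOn (fun y => g y * f y) s μ) (hf : IntegrableOn f s μ)
    (hg : ∀ y ∈ s, |g y| ≤ c) :
    ∫ y in s, |g y * f y| ∂μ ≤ c * ∫ y in s, |f y| ∂μ := by
  rw [← integral_const_mul]
  refine setIntegral_mono_on hgf.abs (hf.abs.const_mul c) hs fun y hy => ?_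
  rw [abs_mul]
  exact mul_le_mul_of_nonneg_right (hg y hy) (abs_nonneg _)

theorem poisson_kernel_deriv_convolution_difference_bound_general
    (f : ℝ → ℝ) (hf : Integrable f)
    (x₁ x₂ : ℝ) (hx : x₁ ≤ x₂) :
    |(∫ y, (1/2) * Real.sign (x₂ - y) * Real.exp (-|x₂ - y|) * f y) -
      (∫ y, (1/2) * Real.sign (x₁ - y) * Real.exp (-|x₁ - y|) * f y)|
    ≤ (1/2) * (1 - Real.exp (x₁ - x₂)) * (∫ z in (Set.Icc x₁ x₂)ᶜ, |f z|) +
        ∫ z in Set.Icc x₁ x₂, |f z| := by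
  set D : ℝ → ℝ := fun y => poissonKernelDeriv (x₂ - y) - poissonKernelDeriv (x₁ - y)
  have hK₂ := integrable_poissonKernelDeriv_mul hf x₂
  have hK₁ := integrable_poissonKernelDeriv_mul hf x₁
  have hDf : Integrable (fun y => D y * f y) :=
    (hK₂.sub hK₁).congr (ae_of_all _ fun y => (sub_mul _ _ _).symm)
  have h_inside : ∫ y in Icc x₁ x₂, |D y * f y| ≤ 1 * ∫ y in Icc x₁ x₂, |f y| :=
    setIntegral_abs_mul_le_of_abs_le measurableSet_Icc hDf.integrableOn hf.integrableOn
      fun y _ => abs_poissonKernelDeriv_sub_le_one _ _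
  have h_outside : ∫ y in (Icc x₁ x₂)ᶜ, |D y * f y|
      ≤ 1 / 2 * (1 - Real.exp (x₁ - x₂)) * ∫ y in (Icc x₁ x₂)ᶜ, |f y| := by
    refine setIntegral_abs_mul_le_of_abs_le measurableSet_Icc.compl hDf.integrableOn
      hf.integrableOn fun y hy => ?_
    have h0 : (0 : ℝ) ∉ Icc (x₁ - y) (x₂ - y) := fun h =>
      hy ⟨by linarith [h.1], by linarith [h.2]⟩
    simpa only [sub_sub_sub_cancel_right] using
      abs_poissonKernelDeriv_sub_le_of_zero_notMem (by linarith) h0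
  change |(∫ y, poissonKernelDeriv (x₂ - y) * f y) - ∫ y, poissonKernelDeriv (x₁ - y) * f y|
    ≤ _
  calc _ = |∫ y, D y * f y| := by simp only [← integral_sub hK₂ hK₁, D, sub_mul]
    _ ≤ ∫ y, |D y * f y| := abs_integral_le_integral_abs
    _ = (∫ y in Icc x₁ x₂, |D y * f y|) + ∫ y in (Icc x₁ x₂)ᶜ, |D y * f y| :=
        (integral_add_compl measurableSet_Icc hDf.abs).symm
    _ ≤ _ := by linarith

/-- For `G(x) = -(1/2) e^{-|x|}` with `G'(x) = (1/2) sign(x) e^{-|x|}`,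
`f ∈ L¹(ℝ) ∩ L∞(ℝ)` and `x₁ ≤ x₂`,
`|[G*f]_x(x₂) - [G*f]_x(x₁)| ≤ (1/2)(1 - e^{x₁-x₂}) ∫_{ℝ∖[x₁,x₂]} |f| + ∫_{[x₁,x₂]} |f|`. -/
theorem poisson_kernel_deriv_convolution_difference_bound
    (f : ℝ → ℝ) (hf : Integrable f) (hb : ∃ C, ∀ᵐ x, |f x| ≤ C)
    (x₁ x₂ : ℝ) (hx : x₁ ≤ x₂) :
    |(∫ y, (1/2) * Real.sign (x₂ - y) * Real.exp (-|x₂ - y|) * f y) -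
      (∫ y, (1/2) * Real.sign (x₁ - y) * Real.exp (-|x₁ - y|) * f y)|
    ≤ (1/2) * (1 - Real.exp (x₁ - x₂)) * (∫ z in (Set.Icc x₁ x₂)ᶜ, |f z|) +
        ∫ z in Set.Icc x₁ x₂, |f z| :=
  poisson_kernel_deriv_convolution_difference_bound_general f hf x₁ x₂ hx
end

section
/- Let f : ℝ → ℝ satisfy the one-sided Lipschitz condition f(y) - f(x) ≤ C·(y - x) for all x < y, with C > 0, and suppose f ∈ L¹(ℝ) with ‖f‖_{L¹} ≤ M. Then ‖f‖_{L^∞} ≤ √(2CM). -/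
open MeasureTheory

/-! If `f x = a > 0`, the one-sided bound `f t ≥ a - C (x - t)` for `t < x` keeps `|f|` above a
triangle of height `a` and base `a / C` to the left of `x`, so `a² / (2C) ≤ ‖f‖₁ ≤ M`.
Negative values reduce to positive ones through the reflection `t ↦ -f (-t)`, which satisfies the
same one-sided condition. -/

def OneSidedLipschitzWith (C : ℝ) (f : ℝ → ℝ) : Prop :=
  ∀ x y : ℝ, x < y → f y - f x ≤ C * (y - x)

lemma intervalIntegral_triangle {C : ℝ} (hC : C ≠ 0) (a x : ℝ) :
    ∫ t in (x - a / C)..x, (a - C * (x - t)) = a ^ 2 / (2 * C) := by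
  rw [intervalIntegral.integral_comp_sub_left (fun s ↦ a - C * s),
    intervalIntegral.integral_sub intervalIntegrable_const
      (intervalIntegral.intervalIntegrable_id.const_mul C),
    intervalIntegral.integral_const_mul]
  simp only [sub_self, sub_sub_cancel, intervalIntegral.integral_const, sub_zero, smul_eq_mul,
    integral_id, ne_eq, OfNat.ofNat_ne_zero, not_false_eq_true, zero_pow]
  field_simp
  ring

namespace OneSidedLipschitzWith

variable {C : ℝ} {f : ℝ → ℝ}

lemma neg_comp_neg (hf : OneSidedLipschitzWith C f) :
    OneSidedLipschitzWith C (fun t ↦ -f (-t)) := fun x y hxy ↦ by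
  linarith [hf (-y) (-x) (neg_lt_neg hxy)]

lemma sq_div_le_integral_abs_of_nonneg (hC : 0 < C) (hf : OneSidedLipschitzWith C f)
    (hfi : Integrable f) {x : ℝ} (hx : 0 ≤ f x) :
    f x ^ 2 / (2 * C) ≤ ∫ t, |f t| := by
  have hle : x - f x / C ≤ x := sub_le_self _ (div_nonneg hx hC.le)
  calc f x ^ 2 / (2 * C) = ∫ t in (x - f x / C)..x, (f x - C * (x - t)) :=
        (intervalIntegral_triangle hC.ne' _ _).symm
    _ ≤ ∫ t in (x - f x / C)..x, |f t| := by
        refine intervalIntegral.integral_mono_on_of_le_Ioo hle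
          ((by fun_prop : Continuous _).intervalIntegrable _ _) hfi.abs.intervalIntegrable
          fun t ht ↦ ?_
        linarith [hf t x ht.2, le_abs_self (f t)]
    _ ≤ ∫ t, |f t| := by
        rw [intervalIntegral.integral_of_le hle]
        exact setIntegral_le_integral hfi.abs (.of_forall fun t ↦ abs_nonneg _)

lemma sq_div_le_integral_abs (hC : 0 < C) (hf : OneSidedLipschitzWith C f)
    (hfi : Integrable f) (x : ℝ) :
    f x ^ 2 / (2 * C) ≤ ∫ t, |f t| := by
  rcases le_total 0 (f x) with hx | hx
  · exact hf.sq_div_le_integral_abs_of_nonneg hC hfi hx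
  · have := hf.neg_comp_neg.sq_div_le_integral_abs_of_nonneg hC hfi.comp_neg.neg
      (x := -x) (by simpa using hx)
    simpa [integral_neg_eq_self (fun t ↦ |f t|)] using this

end OneSidedLipschitzWith

/-- If `f ∈ L¹(ℝ)` with `‖f‖_{L¹} ≤ M` satisfies the one-sided
Lipschitz (Oleinik) condition `f(y) - f(x) ≤ C(y-x)` for all `x < y`, `C > 0`,
then `‖f‖_{L∞} ≤ √(2CM)`. -/
theorem oneSided_lipschitz_Linfty_bound
    (f : ℝ → ℝ) (C M : ℝ) (hC : 0 < C)
    (hf : Integrable f) (hM : (∫ x, |f x|) ≤ M)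
    (hOleinik : ∀ x y : ℝ, x < y → f y - f x ≤ C * (y - x)) :
    ∀ x : ℝ, |f x| ≤ Real.sqrt (2 * C * M) := by
  intro x
  have h := (OneSidedLipschitzWith.sq_div_le_integral_abs hC hOleinik hf x).trans hM
  rw [div_le_iff₀ (by positivity)] at h
  exact Real.abs_le_sqrt (by linarith)
end
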